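/- In the digraph LL, if P is a directed path from a to a_i for some i in {1,2}, Q is a directed path from b_j to b for some j in {1,2}, and P and Q are arc-disjoint, then i = j. -/
import Mathlib


namespace TwoPairs

/-- Directed walks in a digraph given by its adjacency relation `A`. -/
inductive DWalk {V : Type*} (A : V → V → Prop) : V → V → Type _
  | nil (v : V) : DWalk A v v
  | cons {u v w : V} : A u v → DWalk A v w → DWalk A u w

variable {V : Type*} {A : V → V → Prop}

/-- The list of arcs of a directed walk. -/
def DWalk.arcs : {u v : V} → DWalk A u v → List (V × V)
  | _, _, .nil _ => []
  | u, _, .cons (v := m) _ q => (u, m) :: q.arcs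

/-- A directed path is a directed walk with pairwise distinct arcs. -/
def DWalk.IsTrail {u v : V} (P : DWalk A u v) : Prop := P.arcs.Nodup

/-- Two directed paths are arc-disjoint if they share no arc. -/
def ArcDisjoint {u v u' v' : V} (P : DWalk A u v) (Q : DWalk A u' v') : Prop :=
  ∀ e ∈ P.arcs, e ∉ Q.arcs

end TwoPairs

namespace TwoPairs

/-- The vertices of the digraph `LL`. -/
inductive VLL : Type
  | a | b | a1 | a2 | b1 | b2
  | L1 | L2 | L3 | L4 | L5 | L6 | L7 | L8 | L9 | L10
  deriving DecidableEq

open VLL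

/-- The arcs of the digraph `LL`. -/
def arcsLL : List (VLL × VLL) :=
  [(a,L1),(L1,L2),(L1,L3),(b1,L2),(b2,L6),(L2,L5),(L3,L4),(L5,L4),(L5,L6),
   (L4,L7),(L4,L8),(L6,L7),(L6,a2),(L7,L10),(L8,L9),(L10,L9),(L10,a1),(L9,b)]

/-- Adjacency relation of `LL`. -/
def AdjLL (x y : VLL) : Prop := (x, y) ∈ arcsLL

/-- `aTgt 0 = a1`, `aTgt 1 = a2`. -/
def aTgt : Fin 2 → VLL
  | 0 => a1 | 1 => a2

/-- `bSrc 0 = b1`, `bSrc 1 = b2`. -/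
def bSrc : Fin 2 → VLL
  | 0 => b1 | 1 => b2

section Aux

variable {V : Type*} {A : V → V → Prop}

theorem DWalk.adj_of_mem_arcs {u v x y : V} (W : DWalk A u v)
    (h : (x, y) ∈ W.arcs) : A x y := by
  induction W with
  | nil => simp [DWalk.arcs] at h
  | cons ha q ih =>
    simp only [DWalk.arcs, List.mem_cons] at h
    rcases h with h | h
    · obtain ⟨rfl, rfl⟩ := Prod.mk.injEq .. ▸ h
      exact ha
    · exact ih h

theorem DWalk.exists_last {u v : V} (W : DWalk A u v) (h : u ≠ v) :
    ∃ x, (x, v) ∈ W.arcs := by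
  induction W with
  | nil => exact absurd rfl h
  | @cons u m w ha q ih =>
    by_cases hmw : m = w
    · subst hmw; exact ⟨u, List.Mem.head _⟩
    · obtain ⟨x, hx⟩ := ih hmw
      exact ⟨x, List.Mem.tail _ hx⟩

theorem DWalk.exists_pred {u v x y : V} (W : DWalk A u v)
    (h : (x, y) ∈ W.arcs) (hx : x ≠ u) : ∃ z, (z, x) ∈ W.arcs := by
  induction W with
  | nil => simp [DWalk.arcs] at h
  | @cons u m w ha q ih =>
    simp only [DWalk.arcs, List.mem_cons, Prod.mk.injEq] at h
    rcases h with ⟨rfl, rfl⟩ | h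
    · exact absurd rfl hx
    · by_cases hxm : x = m
      · subst hxm; exact ⟨u, List.Mem.head _⟩
      · obtain ⟨z, hz⟩ := ih h hxm
        exact ⟨z, List.Mem.tail _ hz⟩

theorem DWalk.exists_first {u v : V} (W : DWalk A u v) (h : u ≠ v) :
    ∃ y, (u, y) ∈ W.arcs := by
  cases W with
  | nil => exact absurd rfl h
  | cons ha q => exact ⟨_, List.Mem.head _⟩

theorem DWalk.exists_succ {u v x y : V} (W : DWalk A u v)
    (h : (x, y) ∈ W.arcs) (hy : y ≠ v) : ∃ z, (y, z) ∈ W.arcs := by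
  induction W with
  | nil => simp [DWalk.arcs] at h
  | @cons u m w ha q ih =>
    simp only [DWalk.arcs, List.mem_cons, Prod.mk.injEq] at h
    rcases h with ⟨rfl, rfl⟩ | h
    · cases q with
      | nil => exact absurd rfl hy
      | cons hb q2 => exact ⟨_, List.Mem.tail _ (List.Mem.head _)⟩
    · obtain ⟨z, hz⟩ := ih h hy
      exact ⟨z, List.Mem.tail _ hz⟩

end Aux

lemma adj_a1 {x : VLL} (h : AdjLL x a1) : x = L10 := by
  cases x <;> simp_all [AdjLL, arcsLL]

lemma adj_L10 {x : VLL} (h : AdjLL x L10) : x = L7 := by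
  cases x <;> simp_all [AdjLL, arcsLL]

lemma adj_a2 {x : VLL} (h : AdjLL x a2) : x = L6 := by
  cases x <;> simp_all [AdjLL, arcsLL]

lemma adj_L6 {x : VLL} (h : AdjLL x L6) : x = L5 ∨ x = b2 := by
  cases x <;> simp_all [AdjLL, arcsLL]

lemma adj_L5 {x : VLL} (h : AdjLL x L5) : x = L2 := by
  cases x <;> simp_all [AdjLL, arcsLL]

lemma adj_b2' {x : VLL} (h : AdjLL x b2) : False := by
  cases x <;> simp_all [AdjLL, arcsLL]

lemma adj_a2' {y : VLL} (h : AdjLL a2 y) : False := by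
  cases y <;> simp_all [AdjLL, arcsLL]

lemma adj_b2_out {y : VLL} (h : AdjLL b2 y) : y = L6 := by
  cases y <;> simp_all [AdjLL, arcsLL]

lemma adj_L6_out {y : VLL} (h : AdjLL L6 y) : y = L7 ∨ y = a2 := by
  cases y <;> simp_all [AdjLL, arcsLL]

lemma adj_L7_out {y : VLL} (h : AdjLL L7 y) : y = L10 := by
  cases y <;> simp_all [AdjLL, arcsLL]

lemma adj_b1_out {y : VLL} (h : AdjLL b1 y) : y = L2 := by
  cases y <;> simp_all [AdjLL, arcsLL]

lemma adj_L2_out {y : VLL} (h : AdjLL L2 y) : y = L5 := by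
  cases y <;> simp_all [AdjLL, arcsLL]

/-- in the digraph `LL`, if `P` is a directed path from `a` to `a_i`,
`Q` is a directed path from `b_j` to `b`, and `P` and `Q` are arc-disjoint, then `i = j`. -/
theorem statement13 (i j : Fin 2)
    (P : DWalk AdjLL VLL.a (aTgt i)) (Q : DWalk AdjLL (bSrc j) VLL.b)
    (hP : P.IsTrail) (hQ : Q.IsTrail) (hPQ : ArcDisjoint P Q) : i = j := by
  fin_cases i <;> fin_cases j
  · rfl
  · -- P : a → a1, Q : b2 → b
    exfalso
    -- P contains (L7, L10)
    obtain ⟨x, hx⟩ := P.exists_last (by decide)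
    obtain rfl := adj_a1 (P.adj_of_mem_arcs hx)
    obtain ⟨z, hz⟩ := P.exists_pred hx (by decide)
    obtain rfl := adj_L10 (P.adj_of_mem_arcs hz)
    -- Q contains (L7, L10)
    obtain ⟨y, hy⟩ := Q.exists_first (by decide)
    obtain rfl := adj_b2_out (Q.adj_of_mem_arcs hy)
    obtain ⟨w, hw⟩ := Q.exists_succ hy (by decide)
    rcases adj_L6_out (Q.adj_of_mem_arcs hw) with rfl | rfl
    · obtain ⟨t, ht⟩ := Q.exists_succ hw (by decide)
      obtain rfl := adj_L7_out (Q.adj_of_mem_arcs ht)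
      exact hPQ _ hz ht
    · obtain ⟨t, ht⟩ := Q.exists_succ hw (by decide)
      exact adj_a2' (Q.adj_of_mem_arcs ht)
  · -- P : a → a2, Q : b1 → b
    exfalso
    -- P contains (L2, L5)
    obtain ⟨x, hx⟩ := P.exists_last (by decide)
    obtain rfl := adj_a2 (P.adj_of_mem_arcs hx)
    obtain ⟨z, hz⟩ := P.exists_pred hx (by decide)
    rcases adj_L6 (P.adj_of_mem_arcs hz) with rfl | rfl
    · obtain ⟨w, hw⟩ := P.exists_pred hz (by decide)
      obtain rfl := adj_L5 (P.adj_of_mem_arcs hw)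
      -- Q contains (L2, L5)
      obtain ⟨y, hy⟩ := Q.exists_first (by decide)
      obtain rfl := adj_b1_out (Q.adj_of_mem_arcs hy)
      obtain ⟨t, ht⟩ := Q.exists_succ hy (by decide)
      obtain rfl := adj_L2_out (Q.adj_of_mem_arcs ht)
      exact hPQ _ hw ht
    · obtain ⟨w, hw⟩ := P.exists_pred hz (by decide)
      exact adj_b2' (P.adj_of_mem_arcs hw)
  · rfl

end TwoPairs
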